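/- There exists a universal constant c > 0 such that the following holds. Let F = {x ↦ Wx : W ∈ ℝ^{r×d}, ‖W‖_F ≤ B} be the class of Frobenius-norm-bounded linear maps over inputs from {x ∈ ℝ^d : ‖x‖ ≤ 1}. Then for any fixed inputs x_1, …, x_m in the unit ball and every ε > 0, log N(F, d_m, ε) ≤ c·r²·B²/ε². -/

import Mathlib

/-!
Let `A` be the linear map `W ↦ (W xᵢ / √m)ᵢ`, so that the empirical distance between `x ↦ W x`
and `x ↦ W' x` is `‖A (W - W')‖`, and `∑ₖ ‖A bₖ‖² = r · (1/m) ∑ᵢ ‖xᵢ‖² ≤ r` for the standard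
basis `b`. In an eigenbasis of `A† A`, with eigenvalues `λₗ` summing to that same trace, the
Frobenius ball of radius `B` is a Euclidean ball and `‖A ·‖²` is the weighted norm `∑ λₗ cₗ²`.
Directions with `B √λₗ < ε/2` are rounded to zero at a cost of at most `ε/2`; the others span an
ellipsoid with semi-axes `aₗ = B √λₗ ≥ ε/2`, whose `ε/2`-packing number is at most
`∏ 3 aₗ / (ε/2)` by comparing volumes. As `log (3a/ρ) ≤ 3 a²/ρ²` for `a ≥ ρ`, the cover has
log-cardinality at most `12 B² ∑ λₗ / ε² ≤ 12 r B² / ε²`.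
-/

noncomputable section

open scoped BigOperators

/-- Euclidean norm of a vector in `ℝ^r`. -/
def euclNorm {r : ℕ} (v : Fin r → ℝ) : ℝ := Real.sqrt (∑ i, (v i) ^ 2)

/-- Frobenius norm of a matrix. -/
def frobNorm {n d : ℕ} (M : Matrix (Fin n) (Fin d) ℝ) : ℝ :=
  Real.sqrt (∑ i, ∑ j, (M i j) ^ 2)

/-- Empirical L2 distance on the fixed inputs `x` between two vector-valued functions. -/
def empDistV {X : Type*} {r m : ℕ} (x : Fin m → X)
    (f g : X → (Fin r → ℝ)) : ℝ :=
  Real.sqrt ((∑ i, (euclNorm (f (x i) - g (x i))) ^ 2) / (m : ℝ))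

open Metric MeasureTheory Module
open scoped NNReal ENNReal

section Volumetric

variable {E : Type*} [NormedAddCommGroup E] [NormedSpace ℝ E] [FiniteDimensional ℝ E]
  {D : E →ₗ[ℝ] E} {ρ : ℝ≥0}

theorem LinearMap.ball_subset_image_closedBall (hρ : 0 < ρ) (hD : ∀ y, ρ * ‖y‖ ≤ ‖D y‖)
    {u : E} (hu : ‖u‖ ≤ 1) : ball (D u) (ρ / 2) ⊆ D '' closedBall 0 (3 / 2) := by
  have hinj : Function.Injective D := fun y z hyz => by
    have h := hD (y - z)
    rw [map_sub, hyz, sub_self, norm_zero] at h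
    exact sub_eq_zero.mp (norm_le_zero_iff.mp (nonpos_of_mul_nonpos_right h (by exact_mod_cast hρ)))
  intro y hy
  obtain ⟨w, hw⟩ := LinearMap.injective_iff_surjective.mp hinj (y - D u)
  have hw' : ‖w‖ < 1 / 2 := by
    refine lt_of_mul_lt_mul_left ?_ ρ.2
    calc ρ * ‖w‖ ≤ ‖D w‖ := hD w
      _ < ρ * (1 / 2) := by rwa [hw, ← dist_eq_norm, mul_one_div]
  refine ⟨u + w, ?_, by rw [map_add, hw, add_sub_cancel]⟩
  rw [mem_closedBall_zero_iff]
  calc ‖u + w‖ ≤ ‖u‖ + ‖w‖ := norm_add_le u w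
    _ ≤ 3 / 2 := by linarith

variable [MeasurableSpace E] [BorelSpace E]

theorem LinearMap.card_le_of_isSeparated_image_closedBall (hρ : 0 < ρ)
    (hD : ∀ y, ρ * ‖y‖ ≤ ‖D y‖) {C : Finset E} (hCK : (C : Set E) ⊆ D '' closedBall 0 1)
    (hC : IsSeparated ρ (C : Set E)) :
    (C.card : ℝ) ≤ |LinearMap.det D| * (3 / ρ) ^ finrank ℝ E := by
  set μ : Measure E := Measure.addHaar
  have hρ' : (0 : ℝ) < ρ := hρ
  have hdisj : (C : Set E).PairwiseDisjoint fun p => ball p (ρ / 2) := by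
    intro p hp q hq hpq
    apply ball_disjoint_ball
    have : (ρ : ℝ≥0∞) < edist p q := hC hp hq hpq
    rw [edist_dist, ← ENNReal.ofReal_coe_nnreal, ENNReal.ofReal_lt_ofReal_iff'] at this
    rw [add_halves]
    exact this.1.le
  have hvol : μ (⋃ p ∈ C, ball p (ρ / 2)) ≤ μ (D '' closedBall 0 (3 / 2)) := by
    refine measure_mono (Set.iUnion₂_subset fun p hp => ?_)
    obtain ⟨u, hu, rfl⟩ := hCK hp
    exact D.ball_subset_image_closedBall hρ hD (mem_closedBall_zero_iff.mp hu)
  rw [measure_biUnion_finset hdisj fun _ _ => measurableSet_ball,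
    Finset.sum_congr rfl fun p _ => Measure.addHaar_ball_center μ p (ρ / 2), Finset.sum_const,
    nsmul_eq_mul, Measure.addHaar_ball_of_pos μ 0 (by positivity), Measure.addHaar_image_linearMap,
    Measure.addHaar_closedBall μ 0 (by norm_num), ← mul_assoc, ← mul_assoc] at hvol
  have hB0 : 0 < μ (ball 0 1) := measure_ball_pos μ 0 one_pos
  have hB1 : μ (ball (0 : E) 1) ≠ ⊤ := measure_ball_lt_top.ne
  rw [ENNReal.mul_le_mul_iff_left hB0.ne' hB1, ← ENNReal.ofReal_natCast, ← ENNReal.ofReal_mul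
    (by positivity), ← ENNReal.ofReal_mul (by positivity), ENNReal.ofReal_le_ofReal_iff
    (by positivity)] at hvol
  rw [show (3 / (ρ : ℝ)) = (3 / 2) / (ρ / 2) by field_simp, div_pow, ← mul_div_assoc,
    le_div_iff₀ (by positivity)]
  exact hvol

theorem LinearMap.packingNumber_image_closedBall_le (hρ : 0 < ρ) (hD : ∀ y, ρ * ‖y‖ ≤ ‖D y‖) :
    packingNumber ρ (D '' closedBall 0 1) ≤ ⌊|LinearMap.det D| * (3 / ρ) ^ finrank ℝ E⌋₊ := by
  refine iSup₂_le fun C hCK => iSup_le fun hC => ?_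
  by_contra! hlt
  obtain ⟨t, htC, ht⟩ := Set.exists_subset_encard_eq (Order.add_one_le_of_lt hlt)
  have htfin : t.Finite := Set.finite_of_encard_eq_coe ht
  have hcard := D.card_le_of_isSeparated_image_closedBall hρ hD (C := htfin.toFinset)
    (by simpa using htC.trans hCK) (by simpa using hC.subset htC)
  have htcard : htfin.toFinset.card = ⌊|LinearMap.det D| * (3 / ρ) ^ finrank ℝ E⌋₊ + 1 := by
    rw [← Set.ncard_eq_toFinset_card t htfin]
    exact_mod_cast htfin.cast_ncard_eq.trans ht
  rw [htcard] at hcard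
  exact (Nat.lt_floor_add_one _).not_ge (by exact_mod_cast hcard)

theorem LinearMap.exists_finset_cover_image_closedBall (hρ : 0 < ρ)
    (hD : ∀ y, ρ * ‖y‖ ≤ ‖D y‖) :
    ∃ C : Finset E, (∀ u : E, ‖u‖ ≤ 1 → ∃ p ∈ C, ‖D u - p‖ ≤ ρ) ∧
      (C.card : ℝ) ≤ |LinearMap.det D| * (3 / ρ) ^ finrank ℝ E := by
  set K := D '' closedBall 0 1
  have hpack := D.packingNumber_image_closedBall_le hρ hD
  have hS : (maximalSeparatedSet ρ K).encard ≤ ⌊|LinearMap.det D| * (3 / ρ) ^ finrank ℝ E⌋₊ :=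
    (encard_maximalSeparatedSet (ne_top_of_le_ne_top (by simp) hpack)).trans_le hpack
  have hfin : (maximalSeparatedSet ρ K).Finite := Set.finite_of_encard_le_coe hS
  refine ⟨hfin.toFinset, fun u hu => ?_, ?_⟩
  · obtain ⟨p, hp, hup⟩ := isCover_maximalSeparatedSet (ne_top_of_le_ne_top (by simp) hpack)
      (Set.mem_image_of_mem D (mem_closedBall_zero_iff.mpr hu))
    refine ⟨p, hfin.mem_toFinset.mpr hp, ?_⟩
    rw [← dist_eq_norm, ← coe_nndist]
    exact_mod_cast edist_le_coe.mp hup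
  · rw [← Set.ncard_eq_toFinset_card _ hfin]
    exact (Nat.cast_le.mpr (Set.encard_le_coe_iff_finite_ncard_le.mp hS).2).trans
      (Nat.floor_le (by positivity))

end Volumetric

theorem EuclideanSpace.exists_finset_cover_diagonal_image_closedBall {κ : Type*} [Fintype κ]
    [DecidableEq κ] (a : κ → ℝ) {ρ : ℝ≥0} (hρ : 0 < ρ) (ha : ∀ s, ρ ≤ a s) :
    ∃ C : Finset (EuclideanSpace ℝ κ), (∀ u : EuclideanSpace ℝ κ, ‖u‖ ≤ 1 →
        ∃ q ∈ C, ‖Matrix.toLpLin 2 2 (Matrix.diagonal a) u - q‖ ≤ ρ) ∧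
      Real.log C.card ≤ 3 * ∑ s, (a s / ρ) ^ 2 := by
  set D := Matrix.toLpLin 2 2 (Matrix.diagonal a)
  have hρ' : (0 : ℝ) < ρ := hρ
  have ha' : ∀ s, 0 < a s := fun s => hρ'.trans_le (ha s)
  have hD : ∀ y, ρ * ‖y‖ ≤ ‖D y‖ := by
    intro y
    refine (pow_le_pow_iff_left₀ (by positivity) (norm_nonneg _) two_ne_zero).mp ?_
    rw [mul_pow, EuclideanSpace.norm_sq_eq, EuclideanSpace.norm_sq_eq, Finset.mul_sum]
    refine Finset.sum_le_sum fun s _ => ?_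
    simp only [D, Matrix.toLpLin_apply, Matrix.mulVec_diagonal, Real.norm_eq_abs, sq_abs, mul_pow]
    gcongr
    exact ha s
  obtain ⟨C, hcov, hcard⟩ := D.exists_finset_cover_image_closedBall hρ hD
  refine ⟨C, hcov, ?_⟩
  obtain ⟨q, hq, -⟩ := hcov 0 (by simp)
  rw [LinearMap.det_toLpLin, Matrix.det_diagonal, abs_of_pos (Finset.prod_pos fun s _ => ha' s),
    finrank_euclideanSpace, ← Finset.card_univ, ← Finset.prod_const,
    ← Finset.prod_mul_distrib] at hcard
  have hpos : ∀ s, 0 < 3 * (a s / ρ) := fun s => by have := ha' s; positivity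
  calc Real.log C.card ≤ Real.log (∏ s, 3 * (a s / ρ)) :=
        Real.log_le_log (by exact_mod_cast Finset.card_pos.mpr ⟨q, hq⟩)
          (hcard.trans_eq (Finset.prod_congr rfl fun s _ => by ring))
    _ = ∑ s, Real.log (3 * (a s / ρ)) := Real.log_prod fun s _ => (hpos s).ne'
    _ ≤ 3 * ∑ s, (a s / ρ) ^ 2 := by
      rw [Finset.mul_sum]
      refine Finset.sum_le_sum fun s _ => ?_
      have h1 : 1 ≤ a s / ρ := (one_le_div hρ').mpr (ha s)
      nlinarith [Real.log_le_sub_one_of_pos (hpos s)]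

theorem Real.log_natCast_monotone : Monotone fun n : ℕ => Real.log n := by
  intro m n h
  rcases m.eq_zero_or_pos with rfl | hm
  · simpa using Real.log_natCast_nonneg n
  · exact Real.log_le_log (by exact_mod_cast hm) (by exact_mod_cast h)

theorem EuclideanSpace.norm_restrict_le {ι : Type*} [Fintype ι] (J : Finset ι)
    (c : EuclideanSpace ℝ ι) : ‖(WithLp.toLp 2 fun s : J => c s : EuclideanSpace ℝ J)‖ ≤ ‖c‖ := by
  refine (pow_le_pow_iff_left₀ (norm_nonneg _) (norm_nonneg _) two_ne_zero).mp ?_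
  rw [EuclideanSpace.norm_sq_eq, EuclideanSpace.norm_sq_eq]
  exact (Finset.sum_coe_sort J fun t => ‖c t‖ ^ 2).le.trans
    (Finset.sum_le_sum_of_subset_of_nonneg (Finset.subset_univ J) fun _ _ _ => by positivity)

theorem EuclideanSpace.sum_mul_sq_le_mul_norm_sq {ι : Type*} [Fintype ι] {μ : ι → ℝ}
    {s : Finset ι} {τ : ℝ} (hτ : 0 ≤ τ) (hμ : ∀ t ∈ s, μ t ≤ τ) (c : EuclideanSpace ℝ ι) :
    ∑ t ∈ s, μ t * c t ^ 2 ≤ τ * ‖c‖ ^ 2 :=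
  calc ∑ t ∈ s, μ t * c t ^ 2 ≤ ∑ t ∈ s, τ * c t ^ 2 :=
        Finset.sum_le_sum fun t ht => mul_le_mul_of_nonneg_right (hμ t ht) (sq_nonneg _)
    _ ≤ ∑ t, τ * c t ^ 2 := Finset.sum_le_sum_of_subset_of_nonneg (Finset.subset_univ s)
        fun _ _ _ => by positivity
    _ = τ * ‖c‖ ^ 2 := by simp [← Finset.mul_sum, EuclideanSpace.norm_sq_eq]

def EuclideanSpace.liftWeighted {ι : Type*} [DecidableEq ι] (μ : ι → ℝ) (J : Finset ι)
    (q : EuclideanSpace ℝ J) : EuclideanSpace ℝ ι :=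
  WithLp.toLp 2 fun t => if h : t ∈ J then q ⟨t, h⟩ / √(μ t) else 0

theorem EuclideanSpace.sum_mul_sq_sub_liftWeighted_le {ι : Type*} [Fintype ι] [DecidableEq ι]
    {μ : ι → ℝ} (hμ : ∀ t, 0 ≤ μ t) {J : Finset ι} {τ : ℝ} (hτ : 0 ≤ τ) (hJ : ∀ t ∉ J, μ t ≤ τ)
    (c : EuclideanSpace ℝ ι) (q : EuclideanSpace ℝ J) :
    ∑ t, μ t * (c t - liftWeighted μ J q t) ^ 2 ≤
      ‖(WithLp.toLp 2 fun s : J => √(μ s) * c s) - q‖ ^ 2 + τ * ‖c‖ ^ 2 := by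
  rw [← Finset.sum_add_sum_compl J]
  gcongr ?_ + ?_
  · rw [EuclideanSpace.norm_sq_eq, ← Finset.sum_coe_sort J]
    refine Finset.sum_le_sum fun s _ => ?_
    simp only [liftWeighted, s.2, dif_pos, PiLp.sub_apply, Real.norm_eq_abs, sq_abs]
    rcases (hμ s).eq_or_lt with h0 | hpos
    · simp [← h0, sq_nonneg]
    · have := (Real.sqrt_pos.mpr hpos).ne'
      field_simp
      rw [Real.sq_sqrt hpos.le]
  · calc ∑ t ∈ Jᶜ, μ t * (c t - liftWeighted μ J q t) ^ 2 = ∑ t ∈ Jᶜ, μ t * c t ^ 2 :=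
          Finset.sum_congr rfl fun t ht => by simp [liftWeighted, Finset.mem_compl.mp ht]
      _ ≤ τ * ‖c‖ ^ 2 :=
          EuclideanSpace.sum_mul_sq_le_mul_norm_sq hτ (fun t ht => hJ t (Finset.mem_compl.mp ht)) c

theorem EuclideanSpace.exists_finset_cover_closedBall_weighted {ι : Type*} [Fintype ι]
    (μ : ι → ℝ) (hμ : ∀ t, 0 ≤ μ t) (B : ℝ) {ε : ℝ} (hε : 0 < ε) :
    ∃ C : Finset (EuclideanSpace ℝ ι), (∀ c : EuclideanSpace ℝ ι, ‖c‖ ≤ B →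
        ∃ p ∈ C, ∑ t, μ t * (c t - p t) ^ 2 ≤ ε ^ 2) ∧
      Real.log C.card ≤ 12 * B ^ 2 * (∑ t, μ t) / ε ^ 2 := by
  classical
  rcases le_or_gt B 0 with hB | hB
  · refine ⟨{0}, fun c hc => ⟨0, Finset.mem_singleton_self _, ?_⟩, ?_⟩
    · simp [norm_le_zero_iff.mp (hc.trans hB)]
      positivity
    · have := Finset.sum_nonneg fun t (_ : t ∈ Finset.univ) => hμ t
      simp only [Finset.card_singleton, Nat.cast_one, Real.log_one]
      positivity
  set J := Finset.univ.filter fun t => ε / 2 ≤ B * √(μ t)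
  have hJ : ∀ t ∉ J, μ t ≤ (ε / 2 / B) ^ 2 := fun t ht => by
    have hlt : (B * √(μ t)) ^ 2 < (ε / 2) ^ 2 := pow_lt_pow_left₀
      (not_le.mp fun h => ht (Finset.mem_filter.mpr ⟨Finset.mem_univ t, h⟩)) (by positivity)
      two_ne_zero
    rw [mul_pow, Real.sq_sqrt (hμ t)] at hlt
    rw [div_pow, le_div_iff₀ (by positivity)]
    linarith
  set ρ : ℝ≥0 := ⟨ε / 2, by positivity⟩
  obtain ⟨C₀, hcov, hcard⟩ := EuclideanSpace.exists_finset_cover_diagonal_image_closedBall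
    (fun s : J => B * √(μ s)) (ρ := ρ) (NNReal.coe_pos.mp (half_pos hε))
    fun s => (Finset.mem_filter.mp s.2).2
  refine ⟨C₀.image (liftWeighted μ J), fun c hc => ?_, ?_⟩
  · set u : EuclideanSpace ℝ J := B⁻¹ • WithLp.toLp 2 fun s : J => c s
    have hu : ‖u‖ ≤ 1 := by
      rw [norm_smul, norm_inv, Real.norm_of_nonneg hB.le, inv_mul_le_one₀ hB]
      exact (EuclideanSpace.norm_restrict_le J c).trans hc
    have hDu : Matrix.toLpLin 2 2 (Matrix.diagonal fun s : J => B * √(μ s)) u =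
        WithLp.toLp 2 fun s : J => √(μ s) * c s := by
      ext s
      simp only [u, Matrix.toLpLin_apply, Matrix.mulVec_diagonal, PiLp.smul_apply, smul_eq_mul]
      field_simp
    obtain ⟨q, hq, hqu⟩ := hcov u hu
    refine ⟨liftWeighted μ J q, Finset.mem_image_of_mem _ hq, ?_⟩
    calc _ ≤ ‖(WithLp.toLp 2 fun s : J => √(μ s) * c s) - q‖ ^ 2 + (ε / 2 / B) ^ 2 * ‖c‖ ^ 2 :=
          EuclideanSpace.sum_mul_sq_sub_liftWeighted_le hμ (by positivity) hJ c q
      _ ≤ (ε / 2) ^ 2 + (ε / 2 / B) ^ 2 * B ^ 2 := by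
          rw [← hDu]
          gcongr
          exact hqu
      _ ≤ ε ^ 2 := by
          field_simp
          nlinarith
  · refine (Real.log_natCast_monotone Finset.card_image_le).trans (hcard.trans ?_)
    calc 3 * ∑ s : J, (B * √(μ s) / ρ) ^ 2 = 12 * B ^ 2 * (∑ t ∈ J, μ t) / ε ^ 2 := by
          rw [Finset.mul_sum, Finset.mul_sum, Finset.sum_div, ← Finset.sum_coe_sort J]
          refine Finset.sum_congr rfl fun s _ => ?_
          rw [show (ρ : ℝ) = ε / 2 from rfl, div_pow, mul_pow, Real.sq_sqrt (hμ s)]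
          ring
      _ ≤ 12 * B ^ 2 * (∑ t, μ t) / ε ^ 2 := by
          gcongr
          exacts [fun t _ _ => hμ t, Finset.subset_univ J]

open InnerProductSpace in
theorem LinearMap.exists_finset_cover_closedBall_hilbertSchmidt {V U ι : Type*}
    [NormedAddCommGroup V] [InnerProductSpace ℝ V] [FiniteDimensional ℝ V]
    [NormedAddCommGroup U] [InnerProductSpace ℝ U] [FiniteDimensional ℝ U] [Fintype ι]
    (A : V →ₗ[ℝ] U) (b : OrthonormalBasis ι ℝ V) (B : ℝ) {ε : ℝ} (hε : 0 < ε) :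
    ∃ C : Finset V, (∀ v, ‖v‖ ≤ B → ∃ p ∈ C, ‖A (v - p)‖ ≤ ε) ∧
      Real.log C.card ≤ 12 * B ^ 2 * (∑ k, ‖A (b k)‖ ^ 2) / ε ^ 2 := by
  classical
  have hP := A.isPositive_adjoint_comp_self
  have hT := hP.isSymmetric
  set e := hT.eigenvectorBasis rfl
  set eig := hT.eigenvalues rfl
  have hnorm_sq : ∀ v, ‖A v‖ ^ 2 = ∑ l, eig l * e.repr v l ^ 2 := by
    intro v
    rw [← real_inner_self_eq_norm_sq, ← LinearMap.adjoint_inner_left, ← LinearMap.comp_apply,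
      ← e.repr.inner_map_map, PiLp.inner_apply]
    refine Finset.sum_congr rfl fun l _ => ?_
    have hdiag : e.repr ((adjoint A ∘ₗ A) v) l = eig l * e.repr v l :=
      hT.eigenvectorBasis_apply_self_apply rfl v l
    simp only [hdiag, RCLike.inner_apply, conj_trivial]
    ring
  have hsum : ∑ l, eig l = ∑ k, ‖A (b k)‖ ^ 2 := by
    have h : ∑ l, eig l = ∑ k, ⟪b k, (adjoint A ∘ₗ A) (b k)⟫_ℝ := by
      simpa using (hT.trace_eq_sum_eigenvalues rfl).symm.trans (LinearMap.trace_eq_sum_inner _ b)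
    rw [h]
    refine Finset.sum_congr rfl fun k _ => ?_
    rw [LinearMap.comp_apply, LinearMap.adjoint_inner_right, real_inner_self_eq_norm_sq]
  obtain ⟨C, hcov, hcard⟩ := EuclideanSpace.exists_finset_cover_closedBall_weighted eig
    (hP.nonneg_eigenvalues rfl) B hε
  refine ⟨C.image e.repr.symm, fun v hv => ?_, ?_⟩
  · obtain ⟨p, hp, hvp⟩ := hcov (e.repr v) (by rwa [LinearIsometryEquiv.norm_map])
    refine ⟨e.repr.symm p, Finset.mem_image_of_mem _ hp, ?_⟩
    rw [← sq_le_sq₀ (norm_nonneg _) hε.le, hnorm_sq]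
    simpa using hvp
  · rw [← hsum]
    exact (Real.log_natCast_monotone Finset.card_image_le).trans hcard

def Matrix.frobVec {r d : ℕ} (W : Matrix (Fin r) (Fin d) ℝ) : EuclideanSpace ℝ (Fin r × Fin d) :=
  WithLp.toLp 2 fun jl => W jl.1 jl.2

/-- At `m = 0` this map is zero, matching the junk value `x / 0 = 0` inside `empDistV`. -/
def empiricalEval {m d : ℕ} (x : Fin m → Fin d → ℝ) (r : ℕ) :
    EuclideanSpace ℝ (Fin r × Fin d) →ₗ[ℝ] EuclideanSpace ℝ (Fin m × Fin r) where
  toFun w := WithLp.toLp 2 fun ij => (√m)⁻¹ * ∑ l, w (ij.2, l) * x ij.1 l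
  map_add' v w := by
    ext ij
    simp [add_mul, Finset.sum_add_distrib, mul_add]
  map_smul' c v := by
    ext ij
    simp only [PiLp.smul_apply, smul_eq_mul, Finset.mul_sum, RingHom.id_apply]
    exact Finset.sum_congr rfl fun _ _ => by ring

theorem Matrix.norm_frobVec {r d : ℕ} (W : Matrix (Fin r) (Fin d) ℝ) :
    ‖W.frobVec‖ = frobNorm W := by
  simp [EuclideanSpace.norm_eq, frobNorm, frobVec, Fintype.sum_prod_type]

theorem empDistV_mulVec {m r d : ℕ} (x : Fin m → Fin d → ℝ) (W W' : Matrix (Fin r) (Fin d) ℝ) :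
    empDistV x (fun v => W.mulVec v) (fun v => W'.mulVec v) =
      ‖empiricalEval x r (W.frobVec - W'.frobVec)‖ := by
  rw [empDistV, EuclideanSpace.norm_eq, Fintype.sum_prod_type, Finset.sum_div]
  congr 1
  refine Finset.sum_congr rfl fun i _ => ?_
  rw [euclNorm, Real.sq_sqrt (by positivity), Finset.sum_div]
  refine Finset.sum_congr rfl fun j _ => ?_
  simp [empiricalEval, Matrix.frobVec, Matrix.mulVec, dotProduct, sub_mul, mul_pow, div_eq_inv_mul]

theorem sum_norm_empiricalEval_basisFun_le {m d : ℕ} (x : Fin m → Fin d → ℝ) (r : ℕ)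
    (hx : ∀ i, euclNorm (x i) ≤ 1) :
    ∑ k, ‖empiricalEval x r (EuclideanSpace.basisFun _ ℝ k)‖ ^ 2 ≤ r := by
  have hcol : ∀ j l, ‖empiricalEval x r (EuclideanSpace.basisFun _ ℝ (j, l))‖ ^ 2 =
      (m : ℝ)⁻¹ * ∑ i, x i l ^ 2 := fun j l => by
    simp [EuclideanSpace.norm_sq_eq, empiricalEval, Fintype.sum_prod_type, PiLp.single_apply,
      ite_and, mul_pow, Finset.mul_sum]
  have hx' : ∀ i, ∑ l, x i l ^ 2 ≤ 1 := fun i => Real.sqrt_le_one.mp (hx i)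
  calc ∑ k, ‖empiricalEval x r (EuclideanSpace.basisFun _ ℝ k)‖ ^ 2
      = r * ((m : ℝ)⁻¹ * ∑ i, ∑ l, x i l ^ 2) := by
        simp only [Fintype.sum_prod_type, hcol, Finset.sum_const, Finset.card_univ,
          Fintype.card_fin, nsmul_eq_mul, ← Finset.mul_sum]
        rw [Finset.sum_comm]
        ring
    _ ≤ r * ((m : ℝ)⁻¹ * ∑ _i : Fin m, 1) := by gcongr with i; exact hx' i
    _ ≤ r := by
      refine mul_le_of_le_one_right (Nat.cast_nonneg r) ?_
      rcases Nat.eq_zero_or_pos m with rfl | hm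
      · simp
      · simp [inv_mul_cancel₀ (show (m : ℝ) ≠ 0 by positivity)]

/-- Lemma (covering number of Frobenius-norm-bounded linear maps): over inputs of
Euclidean norm at most 1, the class `{x ↦ Wx : ‖W‖_F ≤ B}` admits, for every `ε > 0`,
an `ε`-cover in the empirical L2 metric of log-cardinality at most `c r² B² / ε²`. -/
theorem statement11 :
    ∃ c : ℝ, 0 < c ∧
      ∀ (r d m : ℕ) (B ε : ℝ) (x : Fin m → (Fin d → ℝ)),
        (∀ i, euclNorm (x i) ≤ 1) → 0 < ε →
        ∃ G : Finset ((Fin d → ℝ) → (Fin r → ℝ)),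
          (∀ W : Matrix (Fin r) (Fin d) ℝ, frobNorm W ≤ B →
            ∃ g ∈ G, empDistV x (fun v => W.mulVec v) g ≤ ε) ∧
          Real.log G.card ≤ c * (r : ℝ) ^ 2 * B ^ 2 / ε ^ 2 := by
  refine ⟨12, by norm_num, fun r d m B ε x hx hε => ?_⟩
  obtain ⟨C, hcov, hcard⟩ := (empiricalEval x r).exists_finset_cover_closedBall_hilbertSchmidt
    (EuclideanSpace.basisFun _ ℝ) B hε
  classical
  refine ⟨C.image fun p v => (Matrix.of fun j l => p (j, l)).mulVec v, fun W hW => ?_, ?_⟩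
  · obtain ⟨p, hp, hWp⟩ := hcov W.frobVec (by rwa [W.norm_frobVec])
    exact ⟨_, Finset.mem_image_of_mem _ hp, by rwa [empDistV_mulVec]⟩
  · calc _ ≤ Real.log C.card := Real.log_natCast_monotone Finset.card_image_le
      _ ≤ 12 * B ^ 2 * r / ε ^ 2 := by
          grw [hcard, sum_norm_empiricalEval_basisFun_le x r hx]
      _ ≤ 12 * (r : ℝ) ^ 2 * B ^ 2 / ε ^ 2 := by
          rw [mul_right_comm]
          gcongr
          exact_mod_cast Nat.le_self_pow two_ne_zero r
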